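/- An n×n real matrix X = (x_{ij}) lies in the convex hull of the n×n alternating sign matrices if and only if all partial row sums x_{i,1}+...+x_{i,j'} and all partial column sums x_{1,j}+...+x_{i',j} lie in [0,1], and every full row sum and every full column sum equals 1. -/

import Mathlib

open scoped BigOperators
open scoped Classical

namespace ASMPaper

variable {n : ℕ}

/-- Partial row sum `W_{ij} = ∑_{j' ≤ j} a_{i j'}`. -/
def rowPartial (A : Matrix (Fin n) (Fin n) ℝ) (i j : Fin n) : ℝ :=
  ∑ j' ∈ Finset.univ.filter (fun j' : Fin n => j' ≤ j), A i j'

/-- Partial column sum `N_{ij} = ∑_{i' ≤ i} a_{i' j}`. -/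
def colPartial (A : Matrix (Fin n) (Fin n) ℝ) (i j : Fin n) : ℝ :=
  ∑ i' ∈ Finset.univ.filter (fun i' : Fin n => i' ≤ i), A i' j

/-- An alternating sign matrix: entries in {0,1,-1}, rows and columns sum to 1,
nonzero entries alternating in sign along rows and columns (equivalently, all
partial row and column sums lie in {0,1}). -/
def IsASM (A : Matrix (Fin n) (Fin n) ℝ) : Prop :=
  (∀ i j, A i j = 0 ∨ A i j = 1 ∨ A i j = -1) ∧
  (∀ i j, rowPartial A i j = 0 ∨ rowPartial A i j = 1) ∧
  (∀ i j, colPartial A i j = 0 ∨ colPartial A i j = 1) ∧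
  (∀ i, ∑ j, A i j = 1) ∧
  (∀ j, ∑ i, A i j = 1)

/-- The ASM polytope: convex hull of the `n × n` alternating sign matrices. -/
def ASMPolytope (n : ℕ) : Set (Matrix (Fin n) (Fin n) ℝ) :=
  convexHull ℝ {A : Matrix (Fin n) (Fin n) ℝ | IsASM A}

/-- A face of a convex set: a convex extreme subset. -/
def IsFaceOf (F P : Set (Matrix (Fin n) (Fin n) ℝ)) : Prop :=
  IsExtreme ℝ P F ∧ Convex ℝ F

/-- A facet: a nonempty face of dimension one less. -/
def IsFacetOf (G F : Set (Matrix (Fin n) (Fin n) ℝ)) : Prop :=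
  IsFaceOf G F ∧ G.Nonempty ∧
    Module.finrank ℝ (vectorSpan ℝ G) + 1 = Module.finrank ℝ (vectorSpan ℝ F)

/-- The ASMs (vertices) belonging to a face `F`. -/
def faceASMs (F : Set (Matrix (Fin n) (Fin n) ℝ)) : Set (Matrix (Fin n) (Fin n) ℝ) :=
  {A | A ∈ F ∧ IsASM A}

/-- `A` and `B` are estranged in `F` if no proper face of `F` contains both. -/
def Estranged (F : Set (Matrix (Fin n) (Fin n) ℝ)) (A B : Matrix (Fin n) (Fin n) ℝ) : Prop :=
  ∀ F', IsFaceOf F' F → F' ≠ F → ¬(A ∈ F' ∧ B ∈ F')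

/-- The doubly directed graph of a set `X` of ASMs: grid vertices `(i,j)`, with an
(undirected) edge between orthogonally adjacent grid vertices whenever the
corresponding grid edge receives both orientations among the simple flow grids of
members of `X` (the orientation of a grid edge in the simple flow grid of `A` is
determined by the relevant partial sum of `A`). -/
def ddGraph (X : Set (Matrix (Fin n) (Fin n) ℝ)) : SimpleGraph (Fin n × Fin n) where
  Adj v w :=
    (v.1 = w.1 ∧ ((v.2 : ℕ) + 1 = (w.2 : ℕ) ∨ (w.2 : ℕ) + 1 = (v.2 : ℕ)) ∧
      ∃ A ∈ X, ∃ B ∈ X, rowPartial A v.1 (min v.2 w.2) ≠ rowPartial B v.1 (min v.2 w.2)) ∨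
    (v.2 = w.2 ∧ ((v.1 : ℕ) + 1 = (w.1 : ℕ) ∨ (w.1 : ℕ) + 1 = (v.1 : ℕ)) ∧
      ∃ A ∈ X, ∃ B ∈ X, colPartial A (min v.1 w.1) v.2 ≠ colPartial B (min v.1 w.1) v.2)
  symm := ⟨by
    rintro v w (⟨h1, h2, h3⟩ | ⟨h1, h2, h3⟩)
    · exact Or.inl ⟨h1.symm, h2.symm, by rw [min_comm, ← h1]; exact h3⟩
    · exact Or.inr ⟨h1.symm, h2.symm, by rw [min_comm, ← h1]; exact h3⟩⟩
  loopless := ⟨by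
    rintro v (⟨-, h2, -⟩ | ⟨-, h2, -⟩) <;> rcases h2 with h | h <;> omega⟩

/-- Degree of a grid vertex in the doubly directed graph. -/
noncomputable def ddDegree (X : Set (Matrix (Fin n) (Fin n) ℝ)) (v : Fin n × Fin n) : ℕ :=
  ((ddGraph X).neighborSet v).ncard

/-- The (non-isolated) vertices of the doubly directed graph. -/
def ddSupport (X : Set (Matrix (Fin n) (Fin n) ℝ)) : Set (Fin n × Fin n) :=
  {v | ∃ w, (ddGraph X).Adj v w}

/-- The doubly directed graph is connected (on its support). -/
def DDConnected (X : Set (Matrix (Fin n) (Fin n) ℝ)) : Prop :=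
  ∀ v ∈ ddSupport X, ∀ w ∈ ddSupport X, (ddGraph X).Reachable v w

end ASMPaper

/-
Write `c(a, b)` for the sum of the top-left `a × b` corner of `X`. Then `c` vanishes on the top
and left edges, and the conditions on `X` say that it equals `a` resp. `b` on the bottom and
right edges and increases by an amount in `[0, 1]` at every step down or to the right. All of this
survives rounding `c ↦ ⌊c + θ⌋` for `θ ∈ [0, 1)`, and an integral `c` with these properties is
the corner sum function of an ASM. Since `∫₀¹ ⌊x + θ⌋ dθ = x`, the matrix `X` is the average
over `θ` of these ASMs, hence lies in their convex hull.
-/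

open MeasureTheory Set

lemma floor_add_eq_floor_add_indicator (x : ℝ) {θ : ℝ} (hθ : θ ∈ Ico (0 : ℝ) 1) :
    (⌊x + θ⌋ : ℝ) = ⌊x⌋ + (Ico (1 - Int.fract x) 1).indicator 1 θ := by
  obtain ⟨h0, h1⟩ := hθ
  have f0 := Int.fract_nonneg x
  have f1 := Int.fract_lt_one x
  rw [show x + θ = ⌊x⌋ + (Int.fract x + θ) by rw [← add_assoc, Int.floor_add_fract],
    Int.floor_intCast_add, Int.cast_add]
  by_cases h : 1 - Int.fract x ≤ θ
  · have : ⌊Int.fract x + θ⌋ = 1 :=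
      Int.floor_eq_iff.2 ⟨by push_cast; linarith, by push_cast; linarith⟩
    simp [indicator_of_mem (show θ ∈ Ico (1 - Int.fract x) 1 from ⟨h, h1⟩), this]
  · have : ⌊Int.fract x + θ⌋ = 0 :=
      Int.floor_eq_iff.2 ⟨by push_cast; linarith, by push_cast; linarith⟩
    simp [indicator_of_notMem (show θ ∉ Ico (1 - Int.fract x) 1 from fun hm => h hm.1), this]

lemma setIntegral_Ico_floor_add (x : ℝ) : ∫ θ in Ico (0 : ℝ) 1, (⌊x + θ⌋ : ℝ) = x := by
  have hsub : Ico (1 - Int.fract x) 1 ⊆ Ico 0 1 :=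
    Ico_subset_Ico_left (by linarith [Int.fract_lt_one x])
  rw [setIntegral_congr_fun measurableSet_Ico fun θ hθ => floor_add_eq_floor_add_indicator x hθ,
    integral_add (integrable_const _) ((integrable_const 1).indicator measurableSet_Ico),
    integral_const, integral_indicator_one measurableSet_Ico,
    measureReal_restrict_apply measurableSet_Ico, inter_eq_left.2 hsub,
    Real.volume_real_Ico_of_le (by linarith [Int.fract_nonneg x])]
  simp

lemma floor_add_mem_pair (x : ℝ) {θ : ℝ} (hθ : θ ∈ Ico (0 : ℝ) 1) :
    (⌊x + θ⌋ : ℝ) ∈ ({((⌊x⌋ : ℤ) : ℝ), (⌊x⌋ : ℝ) + 1} : Set ℝ) := by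
  rw [floor_add_eq_floor_add_indicator x hθ]
  by_cases h : θ ∈ Ico (1 - Int.fract x) 1 <;> simp [h]

theorem mem_convexHull_floor_add {ι : Type*} [Fintype ι] (h : ι → ℝ) :
    h ∈ convexHull ℝ ((fun θ p => (⌊h p + θ⌋ : ℝ)) '' Ico 0 1) := by
  set f : ℝ → ι → ℝ := fun θ p => ⌊h p + θ⌋
  set S := f '' Ico 0 1
  let μ := volume.restrict (Ico (0 : ℝ) 1)
  have : IsProbabilityMeasure μ := ⟨by simp [μ]⟩
  have hS : S.Finite :=
    (Set.Finite.pi fun p => toFinite ({((⌊h p⌋ : ℤ) : ℝ), (⌊h p⌋ : ℝ) + 1} : Set ℝ)).subset <| by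
      rintro _ ⟨θ, hθ, rfl⟩
      exact mem_univ_pi.2 fun p => floor_add_mem_pair (h p) hθ
  have hmem : ∀ᵐ θ ∂μ, f θ ∈ S :=
    (ae_restrict_mem measurableSet_Ico).mono fun θ hθ => mem_image_of_mem f hθ
  obtain ⟨C, hC⟩ := hS.isBounded.exists_norm_le
  have hf : Integrable f μ :=
    .of_bound (measurable_pi_lambda _ fun p => by fun_prop).aestronglyMeasurable C
      (hmem.mono fun θ hθ => hC _ hθ)
  have hint : ∫ θ, f θ ∂μ = h := by
    funext p
    exact ((ContinuousLinearMap.proj (R := ℝ) (φ := fun _ : ι => ℝ) p).integral_comp_comm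
      hf).symm.trans (setIntegral_Ico_floor_add (h p))
  rw [← hint]
  exact (convex_convexHull ℝ S).integral_mem (hS.isClosed_convexHull (𝕜 := ℝ))
    (hmem.mono fun θ hθ => subset_convexHull ℝ S hθ) hf

lemma floor_sub_floor_eq_zero_or_one {x y : ℝ} (h : x - y ∈ Icc (0 : ℝ) 1) :
    (⌊x⌋ : ℝ) - ⌊y⌋ = 0 ∨ (⌊x⌋ : ℝ) - ⌊y⌋ = 1 := by
  have hle : ⌊y⌋ ≤ ⌊x⌋ := Int.floor_le_floor (by linarith [h.1])
  have hle' : ⌊x⌋ ≤ ⌊y⌋ + 1 := by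
    rw [← Int.floor_add_one]; exact Int.floor_le_floor (by linarith [h.2])
  rcases (by omega : ⌊x⌋ - ⌊y⌋ = 0 ∨ ⌊x⌋ - ⌊y⌋ = 1) with h | h
  · left; exact_mod_cast h
  · right; exact_mod_cast h

namespace ASMPaper

open Finset

variable {n : ℕ}

lemma sum_filter_le_eq_sum_range {M : Type*} [AddCommMonoid M] (f : ℕ → M) (j : Fin n) :
    ∑ j' ∈ univ.filter (fun j' : Fin n => j' ≤ j), f j' = ∑ k ∈ range (j + 1), f k := by
  rw [filter_ge_eq_Iic, Nat.range_succ_eq_Iic, ← Fin.map_valEmbedding_Iic, sum_map]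
  rfl

def natEntry (X : Matrix (Fin n) (Fin n) ℝ) (i j : ℕ) : ℝ :=
  if h : i < n ∧ j < n then X ⟨i, h.1⟩ ⟨j, h.2⟩ else 0

def cornerSum (X : Matrix (Fin n) (Fin n) ℝ) (a b : ℕ) : ℝ :=
  ∑ i ∈ range a, ∑ j ∈ range b, natEntry X i j

def ofCornerSums (G : ℕ → ℕ → ℝ) : Matrix (Fin n) (Fin n) ℝ :=
  Matrix.of fun i j => G (i + 1) (j + 1) - G i (j + 1) - G (i + 1) j + G i j

lemma ofCornerSums_apply (G : ℕ → ℕ → ℝ) (i j : Fin n) :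
    ofCornerSums G i j = (G (i + 1) (j + 1) - G i (j + 1)) - (G (i + 1) j - G i j) := by
  simp only [ofCornerSums, Matrix.of_apply]; ring

lemma rowPartial_ofCornerSums (G : ℕ → ℕ → ℝ) (i j : Fin n) :
    rowPartial (ofCornerSums G) i j =
      (G (i + 1) (j + 1) - G i (j + 1)) - (G (i + 1) 0 - G i 0) := by
  simp only [rowPartial, ofCornerSums_apply]
  exact (sum_filter_le_eq_sum_range _ j).trans (sum_range_sub (fun k => G (i + 1) k - G i k) _)

lemma colPartial_ofCornerSums (G : ℕ → ℕ → ℝ) (i j : Fin n) :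
    colPartial (ofCornerSums G) i j =
      (G (i + 1) (j + 1) - G (i + 1) j) - (G 0 (j + 1) - G 0 j) := by
  simp only [colPartial, ofCornerSums_apply, sub_sub_sub_comm _ (G _ (j + 1))]
  exact (sum_filter_le_eq_sum_range _ i).trans (sum_range_sub (fun k => G k (j + 1) - G k j) _)

lemma sum_row_ofCornerSums (G : ℕ → ℕ → ℝ) (i : Fin n) :
    ∑ j, ofCornerSums G i j = (G (i + 1) n - G i n) - (G (i + 1) 0 - G i 0) := by
  simp only [ofCornerSums_apply]
  exact (Fin.sum_univ_eq_sum_range _ n).trans (sum_range_sub (fun k => G (i + 1) k - G i k) _)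

lemma sum_col_ofCornerSums (G : ℕ → ℕ → ℝ) (j : Fin n) :
    ∑ i, ofCornerSums G i j = (G n (j + 1) - G n j) - (G 0 (j + 1) - G 0 j) := by
  simp only [ofCornerSums_apply, sub_sub_sub_comm _ (G _ (j + 1))]
  exact (Fin.sum_univ_eq_sum_range _ n).trans (sum_range_sub (fun k => G k (j + 1) - G k j) _)

lemma natEntry_apply (X : Matrix (Fin n) (Fin n) ℝ) (i j : Fin n) : natEntry X i j = X i j :=
  dif_pos ⟨i.2, j.2⟩

@[simp] lemma cornerSum_zero_left (X : Matrix (Fin n) (Fin n) ℝ) (b : ℕ) : cornerSum X 0 b = 0 := by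
  simp [cornerSum]

@[simp] lemma cornerSum_zero_right (X : Matrix (Fin n) (Fin n) ℝ) (a : ℕ) : cornerSum X a 0 = 0 := by
  simp [cornerSum]

lemma ofCornerSums_cornerSum (X : Matrix (Fin n) (Fin n) ℝ) : ofCornerSums (cornerSum X) = X := by
  ext i j
  simp only [ofCornerSums_apply, cornerSum, sum_range_succ, natEntry_apply]
  ring

lemma rowPartial_eq_cornerSum_sub (X : Matrix (Fin n) (Fin n) ℝ) (i j : Fin n) :
    rowPartial X i j = cornerSum X (i + 1) (j + 1) - cornerSum X i (j + 1) := by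
  conv_lhs => rw [← ofCornerSums_cornerSum X]
  simp [rowPartial_ofCornerSums]

lemma colPartial_eq_cornerSum_sub (X : Matrix (Fin n) (Fin n) ℝ) (i j : Fin n) :
    colPartial X i j = cornerSum X (i + 1) (j + 1) - cornerSum X (i + 1) j := by
  conv_lhs => rw [← ofCornerSums_cornerSum X]
  simp [colPartial_ofCornerSums]

lemma cornerSum_right_eq {X : Matrix (Fin n) (Fin n) ℝ} (hX : ∀ i, ∑ j, X i j = 1) {a : ℕ}
    (ha : a ≤ n) : cornerSum X a n = a := by
  induction a with
  | zero => simp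
  | succ a ih =>
    have hrow := sum_row_ofCornerSums (cornerSum X) ⟨a, ha⟩
    rw [ofCornerSums_cornerSum, hX] at hrow
    simp only [cornerSum_zero_right, sub_zero] at hrow
    push_cast
    linarith [ih (by omega)]

lemma cornerSum_left_eq {X : Matrix (Fin n) (Fin n) ℝ} (hX : ∀ j, ∑ i, X i j = 1) {b : ℕ}
    (hb : b ≤ n) : cornerSum X n b = b := by
  induction b with
  | zero => simp
  | succ b ih =>
    have hcol := sum_col_ofCornerSums (cornerSum X) ⟨b, hb⟩
    rw [ofCornerSums_cornerSum, hX] at hcol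
    simp only [cornerSum_zero_left, sub_zero] at hcol
    push_cast
    linarith [ih (by omega)]

lemma cornerSum_succ_sub_cornerSum_mem_Icc {X : Matrix (Fin n) (Fin n) ℝ}
    (hX : ∀ i j, 0 ≤ rowPartial X i j ∧ rowPartial X i j ≤ 1) {a k : ℕ} (ha : a < n) (hk : k ≤ n) :
    cornerSum X (a + 1) k - cornerSum X a k ∈ Set.Icc (0 : ℝ) 1 := by
  rcases k with _ | j
  · simp
  · rw [← rowPartial_eq_cornerSum_sub X ⟨a, ha⟩ ⟨j, hk⟩]
    exact hX _ _

lemma cornerSum_sub_cornerSum_succ_mem_Icc {X : Matrix (Fin n) (Fin n) ℝ}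
    (hX : ∀ i j, 0 ≤ colPartial X i j ∧ colPartial X i j ≤ 1) {k b : ℕ} (hk : k ≤ n) (hb : b < n) :
    cornerSum X k (b + 1) - cornerSum X k b ∈ Set.Icc (0 : ℝ) 1 := by
  rcases k with _ | i
  · simp
  · rw [← colPartial_eq_cornerSum_sub X ⟨i, hk⟩ ⟨b, hb⟩]
    exact hX _ _

lemma isASM_ofCornerSums {G : ℕ → ℕ → ℝ} (hleft : ∀ b, G 0 b = 0) (htop : ∀ a, G a 0 = 0)
    (hright : ∀ a ≤ n, G a n = a) (hbottom : ∀ b ≤ n, G n b = b)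
    (hrow : ∀ a < n, ∀ b ≤ n, G (a + 1) b - G a b = 0 ∨ G (a + 1) b - G a b = 1)
    (hcol : ∀ a ≤ n, ∀ b < n, G a (b + 1) - G a b = 0 ∨ G a (b + 1) - G a b = 1) :
    IsASM (ofCornerSums G : Matrix (Fin n) (Fin n) ℝ) := by
  refine ⟨fun i j => ?_, fun i j => ?_, fun i j => ?_, fun i => ?_, fun j => ?_⟩
  · rw [ofCornerSums_apply]
    rcases hrow i i.2 (j + 1) j.2 with h | h <;>
      rcases hrow i i.2 j j.2.le with h' | h' <;> rw [h, h'] <;> norm_num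
  · rw [rowPartial_ofCornerSums, htop, htop, sub_self, sub_zero]
    exact hrow i i.2 (j + 1) j.2
  · rw [colPartial_ofCornerSums, hleft, hleft, sub_self, sub_zero]
    exact hcol (i + 1) i.2 j j.2
  · rw [sum_row_ofCornerSums, hright _ i.2, hright _ i.2.le, htop, htop]
    push_cast; ring
  · rw [sum_col_ofCornerSums, hbottom _ j.2, hbottom _ j.2.le, hleft, hleft]
    push_cast; ring

def ASMInequalities (X : Matrix (Fin n) (Fin n) ℝ) : Prop :=
  (∀ i j, 0 ≤ rowPartial X i j ∧ rowPartial X i j ≤ 1) ∧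
  (∀ i j, 0 ≤ colPartial X i j ∧ colPartial X i j ≤ 1) ∧
  (∀ i, ∑ j, X i j = 1) ∧
  (∀ j, ∑ i, X i j = 1)

lemma IsASM.asmInequalities {A : Matrix (Fin n) (Fin n) ℝ} (hA : IsASM A) : ASMInequalities A := by
  obtain ⟨-, hrow, hcol, hrs, hcs⟩ := hA
  refine ⟨fun i j => ?_, fun i j => ?_, hrs, hcs⟩
  · rcases hrow i j with h | h <;> simp [h]
  · rcases hcol i j with h | h <;> simp [h]

lemma rowPartial_add_smul (a b : ℝ) (X Y : Matrix (Fin n) (Fin n) ℝ) (i j : Fin n) :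
    rowPartial (a • X + b • Y) i j = a • rowPartial X i j + b • rowPartial Y i j := by
  simp [rowPartial, sum_add_distrib, mul_sum]

lemma colPartial_add_smul (a b : ℝ) (X Y : Matrix (Fin n) (Fin n) ℝ) (i j : Fin n) :
    colPartial (a • X + b • Y) i j = a • colPartial X i j + b • colPartial Y i j := by
  simp [colPartial, sum_add_distrib, mul_sum]

lemma convex_setOf_asmInequalities :
    Convex ℝ {X : Matrix (Fin n) (Fin n) ℝ | ASMInequalities X} := by
  rintro X ⟨hXr, hXc, hXrs, hXcs⟩ Y ⟨hYr, hYc, hYrs, hYcs⟩ a b ha hb hab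
  refine ⟨fun i j => ?_, fun i j => ?_, fun i => ?_, fun j => ?_⟩
  · rw [rowPartial_add_smul]
    exact convex_Icc (0 : ℝ) 1 (hXr i j) (hYr i j) ha hb hab
  · rw [colPartial_add_smul]
    exact convex_Icc (0 : ℝ) 1 (hXc i j) (hYc i j) ha hb hab
  · simp [sum_add_distrib, ← mul_sum, hXrs, hYrs, hab]
  · simp [sum_add_distrib, ← mul_sum, hXcs, hYcs, hab]

lemma isASM_ofCornerSums_floor {X : Matrix (Fin n) (Fin n) ℝ} (hX : ASMInequalities X) {θ : ℝ}
    (hθ : θ ∈ Set.Ico (0 : ℝ) 1) :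
    IsASM (ofCornerSums fun a b => (⌊cornerSum X a b + θ⌋ : ℝ) : Matrix (Fin n) (Fin n) ℝ) := by
  obtain ⟨hrow, hcol, hrs, hcs⟩ := hX
  have hθ0 : ⌊θ⌋ = 0 := Int.floor_eq_zero_iff.2 hθ
  have hnat : ∀ k : ℕ, (⌊(k : ℝ) + θ⌋ : ℝ) = k := fun k => by
    rw [Int.floor_natCast_add, hθ0]; simp
  refine isASM_ofCornerSums (fun b => ?_) (fun a => ?_) (fun a ha => ?_) (fun b hb => ?_)
    (fun a ha b hb => ?_) (fun a ha b hb => ?_)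
  · simp [hθ0]
  · simp [hθ0]
  · rw [cornerSum_right_eq hrs ha, hnat]
  · rw [cornerSum_left_eq hcs hb, hnat]
  · refine floor_sub_floor_eq_zero_or_one ?_
    rw [add_sub_add_right_eq_sub]
    exact cornerSum_succ_sub_cornerSum_mem_Icc hrow ha hb
  · refine floor_sub_floor_eq_zero_or_one ?_
    rw [add_sub_add_right_eq_sub]
    exact cornerSum_sub_cornerSum_succ_mem_Icc hcol ha hb

variable (n) in
/-- `ofCornerSums` for corner sums given on the finite grid `{0, …, n}²`, where they form a
normed space. -/
def gridToMatrix : (Fin (n + 1) × Fin (n + 1) → ℝ) →ₗ[ℝ] Matrix (Fin n) (Fin n) ℝ where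
  toFun g := Matrix.of fun i j =>
    g (i.succ, j.succ) - g (i.castSucc, j.succ) - g (i.succ, j.castSucc) + g (i.castSucc, j.castSucc)
  map_add' g g' := by ext; simp only [Pi.add_apply, Matrix.of_apply, Matrix.add_apply]; ring
  map_smul' c g := by ext; simp only [Pi.smul_apply, Matrix.of_apply, Matrix.smul_apply, smul_eq_mul,
    RingHom.id_apply]; ring

lemma gridToMatrix_apply_uncurry (G : ℕ → ℕ → ℝ) :
    gridToMatrix n (fun p => G p.1 p.2) = ofCornerSums G :=
  rfl

/-- inequality description of the ASM polytope. -/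
theorem asm_polytope_inequality_description (n : ℕ) (X : Matrix (Fin n) (Fin n) ℝ) :
    X ∈ ASMPolytope n ↔
      ((∀ i j, 0 ≤ rowPartial X i j ∧ rowPartial X i j ≤ 1) ∧
       (∀ i j, 0 ≤ colPartial X i j ∧ colPartial X i j ≤ 1) ∧
       (∀ i, ∑ j, X i j = 1) ∧
       (∀ j, ∑ i, X i j = 1)) := by
  refine ⟨fun hX => convexHull_min (fun A hA => IsASM.asmInequalities hA)
    convex_setOf_asmInequalities hX, fun hX => ?_⟩
  have hcorner := mem_convexHull_floor_add fun p : Fin (n + 1) × Fin (n + 1) => cornerSum X p.1 p.2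
  have hX' := Set.mem_image_of_mem (gridToMatrix n) hcorner
  rw [LinearMap.image_convexHull, gridToMatrix_apply_uncurry, ofCornerSums_cornerSum] at hX'
  refine convexHull_mono ?_ hX'
  rintro _ ⟨_, ⟨θ, hθ, rfl⟩, rfl⟩
  exact isASM_ofCornerSums_floor hX hθ

end ASMPaper
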